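/- arXiv:1502.06718 — 5 statements merged into one kernel-verified Lean document; each statement's English description precedes it below -/
import Mathlib

section
/- For any probability function π on {0,1,...,n} with n ≥ 1, the polarization measure satisfies POL(π) ≤ 1/4, with equality if and only if π assigns probability 1/2 to each of exactly two points and 0 elsewhere. -/
/-- The polarization measure is at most `1/4`, with equality iff `π` assigns probability
`1/2` to exactly two points. -/
theorem polarization_le_quarter (n : ℕ) (hn : 1 ≤ n) (π : Fin (n + 1) → ℝ)
    (hpos : ∀ x, 0 ≤ π x) (hsum : ∑ x, π x = 1) :
    (∑ x : Fin (n + 1), (π x) ^ 2 * (1 - π x)) ≤ 1 / 4 ∧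
    ((∑ x : Fin (n + 1), (π x) ^ 2 * (1 - π x)) = 1 / 4 ↔
      ∃ i j : Fin (n + 1), i ≠ j ∧ π i = 1 / 2 ∧ π j = 1 / 2 ∧
        ∀ k, k ≠ i → k ≠ j → π k = 0) := by
  have key : ∀ x : Fin (n + 1), 0 ≤ π x / 4 - π x ^ 2 * (1 - π x) := by
    intro x
    nlinarith [mul_nonneg (hpos x) (sq_nonneg (π x - 1/2))]
  have hle : (∑ x : Fin (n + 1), (π x) ^ 2 * (1 - π x)) ≤ 1 / 4 := by
    calc (∑ x : Fin (n + 1), (π x) ^ 2 * (1 - π x)) ≤ ∑ x : Fin (n + 1), π x / 4 :=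
          Finset.sum_le_sum (fun x _ => by linarith [key x])
      _ = 1 / 4 := by rw [← Finset.sum_div, hsum]
  refine ⟨hle, ?_, ?_⟩
  · intro heq
    have hdiff : (∑ x : Fin (n + 1), (π x / 4 - π x ^ 2 * (1 - π x))) = 0 := by
      rw [Finset.sum_sub_distrib, heq, ← Finset.sum_div, hsum]
      norm_num
    have hzero : ∀ x : Fin (n + 1), π x / 4 - π x ^ 2 * (1 - π x) = 0 := by
      intro x
      have := (Finset.sum_eq_zero_iff_of_nonneg (fun x _ => key x)).mp hdiff
      exact this x (Finset.mem_univ x)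
    have hcases : ∀ x : Fin (n + 1), π x = 0 ∨ π x = 1 / 2 := by
      intro x
      have h := hzero x
      have : π x * (2 * π x - 1) ^ 2 = 0 := by nlinarith
      rcases mul_eq_zero.mp this with h1 | h1
      · exact Or.inl h1
      · right; have := pow_eq_zero_iff (n := 2) (by norm_num) |>.mp h1; linarith
    set S := Finset.univ.filter (fun x : Fin (n + 1) => π x = 1 / 2) with hS
    have hsumS : ∑ x, π x = (S.card : ℝ) * (1 / 2) := by
      rw [← Finset.sum_filter_add_sum_filter_not Finset.univ (fun x => π x = 1 / 2)]
      have h1 : ∑ x ∈ Finset.univ.filter (fun x : Fin (n+1) => π x = 1 / 2), π x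
          = (S.card : ℝ) * (1 / 2) := by
        rw [Finset.sum_congr rfl (fun x hx => (Finset.mem_filter.mp hx).2),
          Finset.sum_const, nsmul_eq_mul, hS]
      have h2 : ∑ x ∈ Finset.univ.filter (fun x : Fin (n+1) => ¬ π x = 1 / 2), π x = 0 := by
        apply Finset.sum_eq_zero
        intro x hx
        rcases hcases x with h | h
        · exact h
        · exact absurd h (Finset.mem_filter.mp hx).2
      rw [h1, h2, add_zero]
    have hcard : S.card = 2 := by
      rw [hsum] at hsumS
      have : (S.card : ℝ) = 2 := by linarith
      exact_mod_cast this
    obtain ⟨i, j, hij, hSij⟩ := Finset.card_eq_two.mp hcard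
    refine ⟨i, j, hij, ?_, ?_, ?_⟩
    · have : i ∈ S := by rw [hSij]; simp
      exact (Finset.mem_filter.mp this).2
    · have : j ∈ S := by rw [hSij]; simp
      exact (Finset.mem_filter.mp this).2
    · intro k hki hkj
      rcases hcases k with h | h
      · exact h
      · have : k ∈ S := Finset.mem_filter.mpr ⟨Finset.mem_univ k, h⟩
        rw [hSij] at this
        simp at this
        tauto
  · rintro ⟨i, j, hij, hi, hj, hrest⟩
    have hsub : ({i, j} : Finset (Fin (n + 1))) ⊆ Finset.univ := Finset.subset_univ _
    have : (∑ x : Fin (n + 1), (π x) ^ 2 * (1 - π x))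
        = ∑ x ∈ ({i, j} : Finset (Fin (n + 1))), (π x) ^ 2 * (1 - π x) := by
      symm
      apply Finset.sum_subset hsub
      intro x _ hx
      simp only [Finset.mem_insert, Finset.mem_singleton] at hx
      push_neg at hx
      rw [hrest x hx.1 hx.2]
      ring
    rw [this, Finset.sum_pair hij, hi, hj]
    norm_num
end

section
/- For n = 2, the natural gradient vector field G(η₁,η₂) of the polarization measure (the polynomial vector field with G₁ = −9η₁³η₂ − 9η₁²η₂² + 2η₁³ + 14η₁²η₂ + 5η₁η₂² − 3η₁² − 5η₁η₂ + η₁ and G₂ symmetric in (η₁,η₂)) vanishes exactly at the seven points (0,0), (1,0), (0,1), (1/2,0), (0,1/2), (1/2,1/2), and (1/3,1/3) within the closed solid simplex {η₁,η₂ ≥ 0, η₁+η₂ ≤ 1}. -/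
/-- Within the closed solid simplex, the natural gradient field of the polarization
measure vanishes exactly at the three vertices, the three edge midpoints, and the
uniform distribution. -/
theorem natural_gradient_polarization_zeros (η₁ η₂ : ℝ)
    (h1 : 0 ≤ η₁) (h2 : 0 ≤ η₂) (h12 : η₁ + η₂ ≤ 1) :
    ((-9 * η₁ ^ 3 * η₂ - 9 * η₁ ^ 2 * η₂ ^ 2 + 2 * η₁ ^ 3 + 14 * η₁ ^ 2 * η₂
        + 5 * η₁ * η₂ ^ 2 - 3 * η₁ ^ 2 - 5 * η₁ * η₂ + η₁ = 0) ∧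
     (-9 * η₂ ^ 3 * η₁ - 9 * η₂ ^ 2 * η₁ ^ 2 + 2 * η₂ ^ 3 + 14 * η₂ ^ 2 * η₁
        + 5 * η₂ * η₁ ^ 2 - 3 * η₂ ^ 2 - 5 * η₂ * η₁ + η₂ = 0)) ↔
    ((η₁, η₂) = (0, 0) ∨ (η₁, η₂) = (1, 0) ∨ (η₁, η₂) = (0, 1) ∨
     (η₁, η₂) = (1 / 2, 0) ∨ (η₁, η₂) = (0, 1 / 2) ∨ (η₁, η₂) = (1 / 2, 1 / 2) ∨
     (η₁, η₂) = (1 / 3, 1 / 3)) := by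
  constructor
  · rintro ⟨e1, e2⟩
    have f1 : η₁ * (-9 * η₁ ^ 2 * η₂ - 9 * η₁ * η₂ ^ 2 + 2 * η₁ ^ 2 + 14 * η₁ * η₂
        + 5 * η₂ ^ 2 - 3 * η₁ - 5 * η₂ + 1) = 0 := by linear_combination e1
    have f2 : η₂ * (-9 * η₂ ^ 2 * η₁ - 9 * η₂ * η₁ ^ 2 + 2 * η₂ ^ 2 + 14 * η₂ * η₁
        + 5 * η₁ ^ 2 - 3 * η₂ - 5 * η₁ + 1) = 0 := by linear_combination e2
    rcases mul_eq_zero.mp f1 with hx0 | hg1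
    · -- η₁ = 0
      subst hx0
      have : η₂ * ((2 * η₂ - 1) * (η₂ - 1)) = 0 := by linear_combination e2
      rcases mul_eq_zero.mp this with hy0 | h
      · exact Or.inl (by simp [hy0])
      · rcases mul_eq_zero.mp h with h | h
        · refine Or.inr (Or.inr (Or.inr (Or.inr (Or.inl ?_))))
          have : η₂ = 1 / 2 := by linarith
          simp [this]
        · refine Or.inr (Or.inr (Or.inl ?_))
          have : η₂ = 1 := by linarith
          simp [this]
    · rcases mul_eq_zero.mp f2 with hy0 | hg2
      · -- η₂ = 0
        subst hy0
        have : (2 * η₁ - 1) * (η₁ - 1) = 0 := by linear_combination hg1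
        rcases mul_eq_zero.mp this with h | h
        · refine Or.inr (Or.inr (Or.inr (Or.inl ?_)))
          have : η₁ = 1 / 2 := by linarith
          simp [this]
        · refine Or.inr (Or.inl ?_)
          have : η₁ = 1 := by linarith
          simp [this]
      · -- both cofactors vanish
        have hdiff : (η₁ - η₂) * (2 - 3 * (η₁ + η₂)) = 0 := by
          linear_combination hg1 - hg2
        rcases mul_eq_zero.mp hdiff with h | h
        · -- η₁ = η₂
          have hxy : η₁ = η₂ := by linarith
          subst hxy
          have hcube : (3 * η₁ - 1) ^ 2 * (2 * η₁ - 1) = 0 := by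
            linear_combination -hg1
          rcases mul_eq_zero.mp hcube with h | h
          · have : 3 * η₁ - 1 = 0 := by
              exact pow_eq_zero_iff (n := 2) (by norm_num) |>.mp h
            have : η₁ = 1 / 3 := by linarith
            exact Or.inr (Or.inr (Or.inr (Or.inr (Or.inr (Or.inr (by simp [this]))))))
          · have : η₁ = 1 / 2 := by linarith
            exact Or.inr (Or.inr (Or.inr (Or.inr (Or.inr (Or.inl (by simp [this]))))))
        · -- η₁ + η₂ = 2/3
          have hy : η₂ = 2 / 3 - η₁ := by linarith
          subst hy
          have hsq : (3 * η₁ - 1) ^ 2 = 0 := by linear_combination -9 * hg1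
          have : 3 * η₁ - 1 = 0 := pow_eq_zero_iff (n := 2) (by norm_num) |>.mp hsq
          have h13 : η₁ = 1 / 3 := by linarith
          refine Or.inr (Or.inr (Or.inr (Or.inr (Or.inr (Or.inr ?_)))))
          rw [h13]; norm_num
  · rintro (h | h | h | h | h | h | h) <;>
      (obtain ⟨ha, hb⟩ := Prod.mk.injEq .. ▸ h; injection h with ha hb; subst ha; subst hb;
        constructor <;> ring)
end

section
/- The Jacobian matrix of the natural gradient vector field G of the polarization measure (n = 2) evaluated at each vertex (0,0), (1,0), (0,1) of the solid simplex equals the 2×2 identity matrix; in particular both eigenvalues are +1 and the vertices are repelling fixed points. -/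
/-! For fixed `b`, `G₁` is a cubic in `a`, and for fixed `a` a quadratic in `b`, so both partial
derivatives are explicit polynomials. On the vertex set, which is closed under `(a, b) ↦ (b, a)`,
`∂₁G₁ = 1` and `∂₂G₁ = 0`; since `G₂(a, b) = G₁(b, a)`, the second row of the Jacobian is then
`(0, 1)` as well. -/

theorem hasDerivAt_cubic {𝕜 : Type*} [NontriviallyNormedField 𝕜] (c₃ c₂ c₁ c₀ x : 𝕜) :
    HasDerivAt (fun s => c₃ * s ^ 3 + c₂ * s ^ 2 + c₁ * s + c₀)
      (3 * c₃ * x ^ 2 + 2 * c₂ * x + c₁) x := by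
  have h₃ := (hasDerivAt_pow 3 x).const_mul c₃
  have h₂ := (hasDerivAt_pow 2 x).const_mul c₂
  have h₁ := (hasDerivAt_id x).const_mul c₁
  exact (((h₃.add h₂).add h₁).add_const c₀).congr_deriv (by push_cast; ring)

def natGrad₁ (a b : ℝ) : ℝ :=
  -9 * a ^ 3 * b - 9 * a ^ 2 * b ^ 2 + 2 * a ^ 3 + 14 * a ^ 2 * b
    + 5 * a * b ^ 2 - 3 * a ^ 2 - 5 * a * b + a

theorem deriv_natGrad₁_left (a b : ℝ) :
    deriv (fun s => natGrad₁ s b) a = -27 * a ^ 2 * b - 18 * a * b ^ 2 + 6 * a ^ 2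
      + 28 * a * b + 5 * b ^ 2 - 6 * a - 5 * b + 1 := by
  have hcubic : (fun s => natGrad₁ s b) = fun s => (-9 * b + 2) * s ^ 3
      + (-9 * b ^ 2 + 14 * b - 3) * s ^ 2 + (5 * b ^ 2 - 5 * b + 1) * s + 0 := by
    funext s
    unfold natGrad₁
    ring
  rw [hcubic, (hasDerivAt_cubic _ _ _ _ a).deriv]
  ring

theorem deriv_natGrad₁_right (a b : ℝ) :
    deriv (fun s => natGrad₁ a s) b
      = -9 * a ^ 3 - 18 * a ^ 2 * b + 14 * a ^ 2 + 10 * a * b - 5 * a := by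
  have hquadratic : (fun s => natGrad₁ a s) = fun s => 0 * s ^ 3 + (-9 * a ^ 2 + 5 * a) * s ^ 2
      + (-9 * a ^ 3 + 14 * a ^ 2 - 5 * a) * s + (2 * a ^ 3 - 3 * a ^ 2 + a) := by
    funext s
    unfold natGrad₁
    ring
  rw [hquadratic, (hasDerivAt_cubic _ _ _ _ b).deriv]
  ring

/-- The Jacobian of the natural gradient field of the polarization measure at each
vertex of the solid simplex is the identity matrix (hence both eigenvalues are `+1`
and the vertices repel the flow). -/
theorem jacobian_at_vertices_eq_identity :
    (let G₁ : ℝ → ℝ → ℝ := fun a b =>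
      -9 * a ^ 3 * b - 9 * a ^ 2 * b ^ 2 + 2 * a ^ 3 + 14 * a ^ 2 * b
        + 5 * a * b ^ 2 - 3 * a ^ 2 - 5 * a * b + a;
    let G₂ : ℝ → ℝ → ℝ := fun a b => G₁ b a;
    let J : ℝ → ℝ → Matrix (Fin 2) (Fin 2) ℝ := fun a b =>
      !![deriv (fun s => G₁ s b) a, deriv (fun s => G₁ a s) b;
         deriv (fun s => G₂ s b) a, deriv (fun s => G₂ a s) b];
    J 0 0 = 1 ∧ J 1 0 = 1 ∧ J 0 1 = 1) := by
  intro G₁ G₂ J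
  have hG₁ : G₁ = natGrad₁ := rfl
  simp only [J, G₂, hG₁, deriv_natGrad₁_left, deriv_natGrad₁_right, Matrix.one_fin_two]
  norm_num
end

section
/- The Jacobian matrix of the natural gradient field G of the polarization measure (n = 2) at the edge midpoints satisfies: J(0,1/2) = −(1/8)[[2,0],[1,4]], J(1/2,0) = −(1/8)[[4,1],[0,2]], and J(1/2,1/2) = −(1/8)[[3,−1],[−1,3]]; each of these matrices has two strictly negative eigenvalues, so the midpoints are attracting fixed points. -/
/-! A real eigenvalue `μ` of a `2 × 2` matrix is a root of `μ ^ 2 - (trace) μ + det`, which is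
positive for `μ ≥ 0` once the trace is negative and the determinant positive. All three
Jacobians have trace `-3/4` and determinant `1/8`. -/

namespace Matrix

variable {K : Type*} [Field K]

theorem sq_sub_trace_mul_add_det_eq_zero_of_mem_spectrum {A : Matrix (Fin 2) (Fin 2) K} {μ : K}
    (h : μ ∈ spectrum K A) : μ ^ 2 - A.trace * μ + A.det = 0 := by
  simpa [charpoly_fin_two] using mem_spectrum_iff_isRoot_charpoly.mp h

theorem neg_of_mem_spectrum_of_trace_neg_of_det_pos [LinearOrder K] [IsStrictOrderedRing K]
    {A : Matrix (Fin 2) (Fin 2) K} (htr : A.trace < 0) (hdet : 0 < A.det) {μ : K}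
    (h : μ ∈ spectrum K A) : μ < 0 := by
  have hchar := sq_sub_trace_mul_add_det_eq_zero_of_mem_spectrum h
  by_contra! hμ
  nlinarith [mul_nonpos_of_nonpos_of_nonneg htr.le hμ]

end Matrix

theorem deriv_polarizationField_fst (a b : ℝ) :
    deriv (fun s : ℝ => -9 * s ^ 3 * b - 9 * s ^ 2 * b ^ 2 + 2 * s ^ 3 + 14 * s ^ 2 * b
        + 5 * s * b ^ 2 - 3 * s ^ 2 - 5 * s * b + s) a
      = -27 * a ^ 2 * b - 18 * a * b ^ 2 + 6 * a ^ 2 + 28 * a * b + 5 * b ^ 2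
        - 6 * a - 5 * b + 1 := by
  simp (disch := fun_prop) only [deriv_fun_add, deriv_fun_sub, deriv_const_mul_field,
    deriv_mul_const_field, deriv_pow_field, deriv_const_mul_id, deriv_id'']
  push_cast
  ring

theorem deriv_polarizationField_snd (a b : ℝ) :
    deriv (fun s : ℝ => -9 * a ^ 3 * s - 9 * a ^ 2 * s ^ 2 + 2 * a ^ 3 + 14 * a ^ 2 * s
        + 5 * a * s ^ 2 - 3 * a ^ 2 - 5 * a * s + a) b
      = -9 * a ^ 3 - 18 * a ^ 2 * b + 14 * a ^ 2 + 10 * a * b - 5 * a := by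
  simp (disch := fun_prop) only [deriv_fun_add, deriv_fun_sub, deriv_const_mul_field,
    deriv_pow_field, deriv_const_mul_id, deriv_const]
  push_cast
  ring

/-- The Jacobian of the natural gradient field of the polarization measure at the edge
midpoints takes the stated values, and each has two strictly negative eigenvalues, so the
midpoints attract the flow. -/
theorem jacobian_at_midpoints :
    (let G₁ : ℝ → ℝ → ℝ := fun a b =>
      -9 * a ^ 3 * b - 9 * a ^ 2 * b ^ 2 + 2 * a ^ 3 + 14 * a ^ 2 * b
        + 5 * a * b ^ 2 - 3 * a ^ 2 - 5 * a * b + a;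
    let G₂ : ℝ → ℝ → ℝ := fun a b => G₁ b a;
    let J : ℝ → ℝ → Matrix (Fin 2) (Fin 2) ℝ := fun a b =>
      !![deriv (fun s => G₁ s b) a, deriv (fun s => G₁ a s) b;
         deriv (fun s => G₂ s b) a, deriv (fun s => G₂ a s) b];
    J 0 (1 / 2) = -(1 / 8 : ℝ) • !![(2 : ℝ), 0; 1, 4] ∧
    J (1 / 2) 0 = -(1 / 8 : ℝ) • !![(4 : ℝ), 1; 0, 2] ∧
    J (1 / 2) (1 / 2) = -(1 / 8 : ℝ) • !![(3 : ℝ), -1; -1, 3] ∧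
    (∀ μ ∈ spectrum ℝ (J 0 (1 / 2)), μ < 0) ∧
    (∀ μ ∈ spectrum ℝ (J (1 / 2) 0), μ < 0) ∧
    (∀ μ ∈ spectrum ℝ (J (1 / 2) (1 / 2)), μ < 0)) := by
  intro G₁ G₂ J
  have hJ (a b : ℝ) : J a b =
      !![-27 * a ^ 2 * b - 18 * a * b ^ 2 + 6 * a ^ 2 + 28 * a * b + 5 * b ^ 2 - 6 * a - 5 * b + 1,
         -9 * a ^ 3 - 18 * a ^ 2 * b + 14 * a ^ 2 + 10 * a * b - 5 * a;
         -9 * b ^ 3 - 18 * b ^ 2 * a + 14 * b ^ 2 + 10 * b * a - 5 * b,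
         -27 * b ^ 2 * a - 18 * b * a ^ 2 + 6 * b ^ 2 + 28 * b * a + 5 * a ^ 2
          - 6 * b - 5 * a + 1] := by
    simp only [J, G₂, G₁, deriv_polarizationField_fst, deriv_polarizationField_snd]
  have h₁ : J 0 (1 / 2) = -(1 / 8 : ℝ) • !![(2 : ℝ), 0; 1, 4] := by
    rw [hJ]; ext i j; fin_cases i <;> fin_cases j <;> norm_num
  have h₂ : J (1 / 2) 0 = -(1 / 8 : ℝ) • !![(4 : ℝ), 1; 0, 2] := by
    rw [hJ]; ext i j; fin_cases i <;> fin_cases j <;> norm_num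
  have h₃ : J (1 / 2) (1 / 2) = -(1 / 8 : ℝ) • !![(3 : ℝ), -1; -1, 3] := by
    rw [hJ]; ext i j; fin_cases i <;> fin_cases j <;> norm_num
  refine ⟨h₁, h₂, h₃, ?_, ?_, ?_⟩ <;>
  · intro μ hμ
    refine Matrix.neg_of_mem_spectrum_of_trace_neg_of_det_pos ?_ ?_ hμ <;>
    · simp only [h₁, h₂, h₃, Matrix.trace_fin_two, Matrix.det_fin_two, Matrix.smul_apply]
      norm_num
end

section
/- Consider the symmetric cubic polynomial f(π₀,π₁,π₂) = a∑π_i³ + b∑_{i≠j}π_i²π_j + cπ₀π₁π₂ + d∑π_i² + e∑_{i<j}π_iπ_j restricted to the simplex π₀+π₁+π₂ = 1. The Jacobian of the natural gradient of f (in the common parametrization) at the uniform distribution (1/3,1/3) equals (1/9)(6a − c + 6d − 3e) times the 2×2 identity matrix. -/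
private lemma cube_deriv (p q r s x : ℝ) :
    deriv (fun t : ℝ => p * t ^ 3 + q * t ^ 2 + r * t + s) x
      = 3 * p * x ^ 2 + 2 * q * x + r := by
  have h3 : HasDerivAt (fun t : ℝ => t ^ 3) (3 * x ^ 2) x := by
    simpa using hasDerivAt_pow 3 x
  have h2 : HasDerivAt (fun t : ℝ => t ^ 2) (2 * x) x := by
    simpa using hasDerivAt_pow 2 x
  have h1 : HasDerivAt (fun t : ℝ => t) 1 x := hasDerivAt_id x
  have h := (((h3.const_mul p).add (h2.const_mul q)).add (h1.const_mul r)).add_const s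
  exact h.deriv.trans (by ring)

/-- For the symmetric cubic `f` on the simplex, the Jacobian of the natural gradient at
the uniform distribution `(1/3,1/3)` equals `(1/9)(6a − c + 6d − 3e)` times the identity. -/
theorem jacobian_natural_gradient_at_uniform (a b c d e : ℝ) :
    (let f : ℝ → ℝ → ℝ := fun x y =>
      a * ((1 - x - y) ^ 3 + x ^ 3 + y ^ 3) +
      b * ((1 - x - y) ^ 2 * x + (1 - x - y) * x ^ 2 + (1 - x - y) ^ 2 * y +
           (1 - x - y) * y ^ 2 + x ^ 2 * y + x * y ^ 2) +
      c * ((1 - x - y) * x * y) +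
      d * ((1 - x - y) ^ 2 + x ^ 2 + y ^ 2) +
      e * ((1 - x - y) * x + (1 - x - y) * y + x * y);
    let G₁ : ℝ → ℝ → ℝ := fun x y =>
      (1 - x) * x * deriv (fun s => f s y) x + (-(x * y)) * deriv (fun s => f x s) y;
    let G₂ : ℝ → ℝ → ℝ := fun x y =>
      (-(x * y)) * deriv (fun s => f s y) x + (1 - y) * y * deriv (fun s => f x s) y;
    let J : Matrix (Fin 2) (Fin 2) ℝ :=
      !![deriv (fun s => G₁ s (1 / 3)) (1 / 3), deriv (fun s => G₁ (1 / 3) s) (1 / 3);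
         deriv (fun s => G₂ s (1 / 3)) (1 / 3), deriv (fun s => G₂ (1 / 3) s) (1 / 3)];
    J = ((6 * a - c + 6 * d - 3 * e) / 9) • (1 : Matrix (Fin 2) (Fin 2) ℝ)) := by
  intro f G₁ G₂ J
  -- first partial derivative of f
  have hfx : ∀ y x : ℝ, deriv (fun s => f s y) x =
      -3*a + 6*a*y - 3*a*y^2 + 6*a*x - 6*a*x*y + b - 4*b*y + 3*b*y^2 - 2*b*x + 6*b*x*y
        + c*y - c*y^2 - 2*c*x*y - 2*d + 2*d*y + 4*d*x + e - e*y - 2*e*x := by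
    intro y x
    have hrw : (fun s => f s y) = (fun t : ℝ =>
        (0 : ℝ) * t ^ 3
        + (3*a - 3*a*y - b + 3*b*y - c*y + 2*d - e) * t ^ 2
        + (-3*a + 6*a*y - 3*a*y^2 + b - 4*b*y + 3*b*y^2 + c*y - c*y^2 - 2*d + 2*d*y + e - e*y) * t
        + (a - 3*a*y + 3*a*y^2 + b*y - b*y^2 + d - 2*d*y + 2*d*y^2 + e*y - e*y^2)) := by
      funext t; simp only [f]; ring
    rw [hrw, cube_deriv]; ring
  have hsymm : ∀ x s : ℝ, f x s = f s x := by intro x s; simp only [f]; ring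
  have hfy : ∀ x y : ℝ, deriv (fun s => f x s) y =
      -3*a + 6*a*x - 3*a*x^2 + 6*a*y - 6*a*y*x + b - 4*b*x + 3*b*x^2 - 2*b*y + 6*b*y*x
        + c*x - c*x^2 - 2*c*y*x - 2*d + 2*d*x + 4*d*y + e - e*x - 2*e*y := by
    intro x y
    have : (fun s => f x s) = (fun s => f s x) := funext fun s => hsymm x s
    rw [this, hfx]
  have h11 : deriv (fun s => G₁ s (1 / 3)) (1 / 3) = (6 * a - c + 6 * d - 3 * e) / 9 := by
    have hrw : (fun s => G₁ s (1 / 3)) = (fun t : ℝ =>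
        (-3*a - b + c - 4*d + 2*e) * t ^ 3
        + (4*a + (2/3)*b - c + (14/3)*d - (7/3)*e) * t ^ 2
        + (-a - (1/9)*b + (2/9)*c - (10/9)*d + (5/9)*e) * t + 0) := by
      funext s; simp only [G₁]; rw [hfx, hfy]; ring
    rw [hrw, cube_deriv]; ring
  have h22 : deriv (fun s => G₂ (1 / 3) s) (1 / 3) = (6 * a - c + 6 * d - 3 * e) / 9 := by
    have hrw : (fun s => G₂ (1 / 3) s) = (fun t : ℝ =>
        (-3*a - b + c - 4*d + 2*e) * t ^ 3
        + (4*a + (2/3)*b - c + (14/3)*d - (7/3)*e) * t ^ 2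
        + (-a - (1/9)*b + (2/9)*c - (10/9)*d + (5/9)*e) * t + 0) := by
      funext s; simp only [G₂]; rw [hfx, hfy]; ring
    rw [hrw, cube_deriv]; ring
  have h12 : deriv (fun s => G₁ (1 / 3) s) (1 / 3) = 0 := by
    have hrw : (fun s => G₁ (1 / 3) s) = (fun t : ℝ =>
        (0 : ℝ) * t ^ 3
        + (-2*a + (2/3)*b - (4/3)*d + (2/3)*e) * t ^ 2
        + ((4/3)*a - (4/9)*b + (8/9)*d - (4/9)*e) * t
        + (-(2/9)*a + (2/27)*b - (4/27)*d + (2/27)*e)) := by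
      funext s; simp only [G₁]; rw [hfx, hfy]; ring
    rw [hrw, cube_deriv]; ring
  have h21 : deriv (fun s => G₂ s (1 / 3)) (1 / 3) = 0 := by
    have hrw : (fun s => G₂ s (1 / 3)) = (fun t : ℝ =>
        (0 : ℝ) * t ^ 3
        + (-2*a + (2/3)*b - (4/3)*d + (2/3)*e) * t ^ 2
        + ((4/3)*a - (4/9)*b + (8/9)*d - (4/9)*e) * t
        + (-(2/9)*a + (2/27)*b - (4/27)*d + (2/27)*e)) := by
      funext s; simp only [G₂]; rw [hfx, hfy]; ring
    rw [hrw, cube_deriv]; ring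
  simp only [J]
  rw [h11, h12, h21, h22]
  ext i j
  fin_cases i <;> fin_cases j <;>
    simp [Matrix.one_apply]
end
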